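/- Consider the scalar system x'(t) = u(t) x(t), x(0) = 1, with controls u ∈ L^∞((0,∞), [0,1]). For u ≡ 1 the infinite-horizon cost ∫₀^∞ (u(t) - 1) x(t) dt equals 0, while for the control u_τ = 1_{[0,τ)} (any τ ≥ 0) the cost equals ∫_τ^∞ (-1) e^τ dt = -∞; in particular the constant control 1 is not optimal for the infinite-horizon problem. -/

import Mathlib

open MeasureTheory Set Filter intervalIntegral Topology

theorem HasDerivAt.ite_lt_of_ne {f : ℝ → ℝ} {f' τ t : ℝ} (hf : HasDerivAt f f' t) (ht : t ≠ τ) :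
    HasDerivAt (fun s => if s < τ then f s else f τ) (if t < τ then f' else 0) t := by
  rcases ht.lt_or_gt with h | h
  · have hfreeze : (fun s => if s < τ then f s else f τ) =ᶠ[𝓝 t] f := by
      filter_upwards [Iio_mem_nhds h] with s hs using if_pos hs
    simpa [h] using hf.congr_of_eventuallyEq hfreeze
  · have hfreeze : (fun s => if s < τ then f s else f τ) =ᶠ[𝓝 t] fun _ => f τ := by
      filter_upwards [Ioi_mem_nhds h] with s hs using if_neg (not_lt.2 hs.le)
    simpa [h.not_gt] using (hasDerivAt_const t (f τ)).congr_of_eventuallyEq hfreeze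

theorem intervalIntegral.integral_ite_lt {E : Type*} [NormedAddCommGroup E] [NormedSpace ℝ E]
    {f g : ℝ → E} {a τ b : ℝ} (haτ : a ≤ τ) (hτb : τ ≤ b)
    (hf : IntervalIntegrable f volume a τ) (hg : IntervalIntegrable g volume τ b) :
    ∫ t in a..b, (if t < τ then f t else g t) = (∫ t in a..τ, f t) + ∫ t in τ..b, g t := by
  have hleft : ∀ᵐ t, t ∈ uIoc a τ → (if t < τ then f t else g t) = f t := by
    filter_upwards [Measure.ae_ne volume τ] with t htτ ht
    rw [uIoc_of_le haτ] at ht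
    exact if_pos (ht.2.lt_of_ne htτ)
  have hright : EqOn (fun t => if t < τ then f t else g t) g (uIcc τ b) := by
    intro t ht
    rw [uIcc_of_le hτb] at ht
    exact if_neg (not_lt.2 ht.1)
  have hleft_int : IntervalIntegrable (fun t => if t < τ then f t else g t) volume a τ :=
    hf.congr_ae ((ae_restrict_iff' measurableSet_uIoc).2 (hleft.mono fun _ h hm => (h hm).symm))
  have hright_int : IntervalIntegrable (fun t => if t < τ then f t else g t) volume τ b :=
    hg.congr (hright.symm.mono uIoc_subset_uIcc)
  rw [← integral_add_adjacent_intervals hleft_int hright_int, integral_congr_ae hleft,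
    integral_congr hright]

/-- In the counterexample `x' = ux`, `x(0)=1`, `cost = ∫ (u-1)x`: the constant control `1`
gives zero cost, while for each `τ ≥ 0` the bang-bang control `u_τ = 1_{[0,τ)}` has solution
`x_τ` with cost diverging to `-∞`; hence the constant control `1` is not optimal. -/
theorem constant_control_not_optimal :
    ((∫ t in Set.Ioi (0:ℝ), ((1:ℝ) - 1) * Real.exp t) = 0) ∧
    (∀ τ : ℝ, 0 ≤ τ →
      ∀ (uτ xτ : ℝ → ℝ),
        (∀ t, uτ t = if t < τ then 1 else 0) →
        (∀ t, xτ t = if t < τ then Real.exp t else Real.exp τ) →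
        xτ 0 = 1 ∧
        (∀ t ∈ Set.Ici (0:ℝ), t ≠ τ → HasDerivAt xτ (uτ t * xτ t) t) ∧
        Tendsto (fun T => ∫ t in (0:ℝ)..T, (uτ t - 1) * xτ t) atTop atBot) := by
  refine ⟨by simp, fun τ hτ uτ xτ huτ hxτ => ?_⟩
  obtain rfl : uτ = _ := funext huτ
  obtain rfl : xτ = _ := funext hxτ
  refine ⟨?_, fun t _ htτ => ?_, ?_⟩
  · rcases hτ.lt_or_eq with hτ_pos | rfl
    · simp [hτ_pos]
    · simp
  · convert (Real.hasDerivAt_exp t).ite_lt_of_ne htτ using 1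
    split_ifs with htτ' <;> simp [htτ']
  · have hcost : ∀ t, ((if t < τ then (1:ℝ) else 0) - 1) *
        (if t < τ then Real.exp t else Real.exp τ) = if t < τ then 0 else -Real.exp τ := by
      intro t; split_ifs <;> simp
    simp_rw [hcost]
    refine ((tendsto_atTop_add_const_right _ (-τ) tendsto_id).atTop_mul_const_of_neg
      (neg_neg_of_pos (Real.exp_pos τ))).congr' ?_
    filter_upwards [eventually_ge_atTop τ] with T hT
    rw [integral_ite_lt hτ hT intervalIntegrable_const intervalIntegrable_const]
    simp [sub_eq_add_neg]
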